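/- arXiv:1707.06979 — 6 statements merged into one kernel-verified Lean document; each statement's English description precedes it below -/
import Mathlib

section
/- Let U and V be Hilbert spaces and b : U × V → ℝ a bounded bilinear form satisfying the inf-sup condition with constant C_b > 0 (i.e., for all u ∈ U, sup over v ≠ 0 of b(u,v)/‖v‖_V ≥ C_b ‖u‖_U) and such that b(u,·) = 0 for all v implies u = 0. Define the trial-to-test operator Θ : U → V by ⟨Θu, v⟩_V = b(u,v) for all v ∈ V. Then for all u ∈ U, C_b² ‖u‖_U² ≤ b(u, Θu) ≤ ‖b‖² ‖u‖_U², where ‖b‖ is the boundedness constant of b. -/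
/-!
Since `⟪Θ u, v⟫ = b u v`, we have `b u (Θ u) = ‖Θ u‖²`, and `‖Θ u‖` is the dual norm of
`b u ·`. By Cauchy–Schwarz the inf-sup quotient is at most `‖Θ u‖`, which gives the lower
bound; testing the boundedness of `b` against `v = Θ u` gives `‖Θ u‖² ≤ ‖b‖ ‖u‖ ‖Θ u‖`,
hence the upper bound.
-/

open scoped RealInnerProductSpace

theorem sq_le_sq_of_sq_le_mul {x c : ℝ} (h : x ^ 2 ≤ c * x) : x ^ 2 ≤ c ^ 2 := by
  nlinarith [sq_nonneg (c - x)]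

theorem iSup_inner_div_norm_le_norm {V : Type*} [NormedAddCommGroup V] [InnerProductSpace ℝ V]
    (w : V) : ⨆ v : {v : V // v ≠ 0}, ⟪w, (v : V)⟫ / ‖(v : V)‖ ≤ ‖w‖ := by
  refine Real.iSup_le (fun v => ?_) (norm_nonneg w)
  rw [div_le_iff₀ (norm_pos_iff.mpr v.2)]
  exact real_inner_le_norm w v

theorem stmt0_general
    {U V : Type*} [NormedAddCommGroup U] [InnerProductSpace ℝ U]
    [NormedAddCommGroup V] [InnerProductSpace ℝ V]
    (b : U →L[ℝ] V →L[ℝ] ℝ) (Mb Cb : ℝ) (hCb : 0 < Cb)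
    (hbound : ∀ (u : U) (v : V), |b u v| ≤ Mb * ‖u‖ * ‖v‖)
    (hinfsup : ∀ u : U, Cb * ‖u‖ ≤ ⨆ (v : {v : V // v ≠ 0}), b u (v : V) / ‖(v : V)‖)
    (Θ : U → V) (hΘ : ∀ (u : U) (v : V), ⟪Θ u, v⟫ = b u v) :
    ∀ u : U, Cb ^ 2 * ‖u‖ ^ 2 ≤ b u (Θ u) ∧ b u (Θ u) ≤ Mb ^ 2 * ‖u‖ ^ 2 := by
  intro u
  have hself : b u (Θ u) = ‖Θ u‖ ^ 2 := by rw [← hΘ, real_inner_self_eq_norm_sq]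
  have hlower : Cb * ‖u‖ ≤ ‖Θ u‖ := by
    have h := hinfsup u
    simp_rw [← hΘ u] at h
    exact h.trans (iSup_inner_div_norm_le_norm (Θ u))
  have hupper : ‖Θ u‖ ^ 2 ≤ Mb * ‖u‖ * ‖Θ u‖ :=
    hself ▸ (le_abs_self _).trans (hbound u (Θ u))
  rw [hself, ← mul_pow, ← mul_pow]
  exact ⟨pow_le_pow_left₀ (by positivity) hlower 2, sq_le_sq_of_sq_le_mul hupper⟩

/-- Ideal DPG: `C_b^2 ‖u‖² ≤ b(u, Θu) ≤ ‖b‖² ‖u‖²` for the trial-to-test operator Θ. -/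
theorem stmt0
    {U V : Type*} [NormedAddCommGroup U] [InnerProductSpace ℝ U] [CompleteSpace U]
    [NormedAddCommGroup V] [InnerProductSpace ℝ V] [CompleteSpace V]
    (b : U →L[ℝ] V →L[ℝ] ℝ) (Mb Cb : ℝ) (hCb : 0 < Cb)
    (hbound : ∀ (u : U) (v : V), |b u v| ≤ Mb * ‖u‖ * ‖v‖)
    (hinfsup : ∀ u : U, Cb * ‖u‖ ≤ ⨆ (v : {v : V // v ≠ 0}), b u (v : V) / ‖(v : V)‖)
    (hinj : ∀ u : U, (∀ v : V, b u v = 0) → u = 0)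
    (Θ : U → V) (hΘ : ∀ (u : U) (v : V), ⟪Θ u, v⟫ = b u v) :
    ∀ u : U, Cb ^ 2 * ‖u‖ ^ 2 ≤ b u (Θ u) ∧ b u (Θ u) ≤ Mb ^ 2 * ‖u‖ ^ 2 :=
  stmt0_general b Mb Cb hCb hbound hinfsup Θ hΘ
end

section
/- Let U, V be Hilbert spaces, b a bounded bilinear form on U × V with boundedness constant ‖b‖ and inf-sup constant C_b > 0, and let B : U → V' be defined by (Bu)(v) = b(u,v). Let Θ : U → V be the trial-to-test operator. Given F ∈ V', let u ∈ U solve b(u,v) = F(v) for all v ∈ V, and let U_h ⊆ U be a closed subspace with u_h ∈ U_h solving b(u_h, Θw_h) = F(Θw_h) for all w_h ∈ U_h. Then ‖B(u − u_h)‖_{V'} = min over w_h ∈ U_h of ‖B(u − w_h)‖_{V'}. -/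
open scoped RealInnerProductSpace

/-!
The trial-to-test operator `Θ` is the Riesz representative of `B`, so `‖B w‖_{V'} = ‖Θ w‖_V`
and the residual is measured in the Hilbert norm of `V`. Testing with `Θ U_h` makes the error
`Θ (u - u_h)` orthogonal to `Θ U_h` (Galerkin orthogonality), and Pythagoras then shows that
`Θ (u - u_h)` is the shortest of the vectors `Θ (u - w_h) = Θ (u - u_h) + Θ (u_h - w_h)`.
-/

theorem norm_le_norm_add_of_inner_eq_zero {F : Type*} [NormedAddCommGroup F]
    [InnerProductSpace ℝ F] {x y : F} (h : ⟪x, y⟫ = 0) : ‖x‖ ≤ ‖x + y‖ := by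
  have hpyth := norm_add_sq_eq_norm_sq_add_norm_sq_real h
  nlinarith [norm_nonneg x, norm_nonneg (x + y), mul_self_nonneg ‖y‖]

section TrialToTest

variable {U V : Type*} [AddCommGroup U] [Module ℝ U] [TopologicalSpace U]
  [NormedAddCommGroup V] [InnerProductSpace ℝ V]
  {b : U →L[ℝ] V →L[ℝ] ℝ} {Θ : U → V}

theorem eq_innerSL_of_inner_eq (hΘ : ∀ u v, ⟪Θ u, v⟫ = b u v) (u : U) :
    b u = innerSL ℝ (Θ u) := by
  ext v
  simp [← hΘ u v]

theorem norm_eq_norm_of_inner_eq (hΘ : ∀ u v, ⟪Θ u, v⟫ = b u v) (u : U) :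
    ‖b u‖ = ‖Θ u‖ := by
  rw [eq_innerSL_of_inner_eq hΘ, innerSL_apply_norm]

theorem map_add_of_inner_eq (hΘ : ∀ u v, ⟪Θ u, v⟫ = b u v) (u w : U) :
    Θ (u + w) = Θ u + Θ w :=
  ext_inner_right ℝ fun v => by simp only [inner_add_left, hΘ, map_add, add_apply]

theorem inner_sub_eq_zero_of_galerkin (hΘ : ∀ u v, ⟪Θ u, v⟫ = b u v) {F : V →L[ℝ] ℝ} {u uh : U}
    (hu : ∀ v, b u v = F v) {Uh : Submodule ℝ U} (hdpg : ∀ wh ∈ Uh, b uh (Θ wh) = F (Θ wh))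
    {wh : U} (hwh : wh ∈ Uh) : ⟪Θ (u - uh), Θ wh⟫ = 0 := by
  rw [hΘ, map_sub, sub_apply, hu, hdpg wh hwh, sub_self]

end TrialToTest

theorem stmt1_general
    {U V : Type*} [NormedAddCommGroup U] [InnerProductSpace ℝ U]
    [NormedAddCommGroup V] [InnerProductSpace ℝ V]
    (b : U →L[ℝ] V →L[ℝ] ℝ)
    (Θ : U → V) (hΘ : ∀ (u : U) (v : V), ⟪Θ u, v⟫ = b u v)
    (Uh : Submodule ℝ U)
    (F : V →L[ℝ] ℝ) (u : U) (hu : ∀ v : V, b u v = F v)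
    (uh : U) (huh : uh ∈ Uh)
    (hdpg : ∀ wh ∈ Uh, b uh (Θ wh) = F (Θ wh)) :
    IsLeast {c : ℝ | ∃ wh ∈ Uh, c = ‖b (u - wh)‖} ‖b (u - uh)‖ := by
  refine ⟨⟨uh, huh, rfl⟩, ?_⟩
  rintro _ ⟨wh, hwh, rfl⟩
  have hsplit : Θ (u - wh) = Θ (u - uh) + Θ (uh - wh) := by
    rw [← map_add_of_inner_eq hΘ, sub_add_sub_cancel]
  rw [norm_eq_norm_of_inner_eq hΘ, norm_eq_norm_of_inner_eq hΘ, hsplit]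
  exact norm_le_norm_add_of_inner_eq_zero
    (inner_sub_eq_zero_of_galerkin hΘ hu hdpg (Uh.sub_mem huh hwh))

/-- Ideal DPG method: the residual `‖B(u − u_h)‖_{V'}` is minimal over the discrete space. -/
theorem stmt1
    {U V : Type*} [NormedAddCommGroup U] [InnerProductSpace ℝ U] [CompleteSpace U]
    [NormedAddCommGroup V] [InnerProductSpace ℝ V] [CompleteSpace V]
    (b : U →L[ℝ] V →L[ℝ] ℝ) (Mb Cb : ℝ) (hCb : 0 < Cb)
    (hbound : ∀ (u : U) (v : V), |b u v| ≤ Mb * ‖u‖ * ‖v‖)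
    (hinfsup : ∀ u : U, Cb * ‖u‖ ≤ ‖b u‖)
    (hinj : ∀ v : V, (∀ u : U, b u v = 0) → v = 0)
    (Θ : U → V) (hΘ : ∀ (u : U) (v : V), ⟪Θ u, v⟫ = b u v)
    (Uh : Submodule ℝ U) (hUh : IsClosed (Uh : Set U))
    (F : V →L[ℝ] ℝ) (u : U) (hu : ∀ v : V, b u v = F v)
    (uh : U) (huh : uh ∈ Uh)
    (hdpg : ∀ wh ∈ Uh, b uh (Θ wh) = F (Θ wh)) :
    IsLeast {c : ℝ | ∃ wh ∈ Uh, c = ‖b (u - wh)‖} ‖b (u - uh)‖ :=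
  stmt1_general b Θ hΘ Uh F u hu uh huh hdpg
end

section
/- Under the assumptions: Π^p the L² projection with approximation property ‖v − Π^p v‖ ≤ C₀ h ‖∇_𝒯 v‖ for v ∈ H¹(𝒯), Π_div^p the Raviart–Thomas projection with ‖σ − Π_div^p σ‖ ≤ C_p h^s |σ|_{H^s(Ω)} for s ∈ (1/2, p+1], and the commutativity div Π_div^p = Π^p div, for σ ∈ H^s(Ω)² ∩ H(div,Ω) with s ∈ (1/2, 1) it holds that ‖γ_{n,𝒮}(1 − Π_div^p)σ‖_{−1/2,𝒮} ≤ C (h^s ‖σ‖_{H^s(Ω)} + h ‖div σ‖_{L²(Ω)}), where the skeleton norm is characterized by duality with broken H¹ functions and C depends only on the approximation constants. -/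
/-!
The pairing splits into `⟪Emb (1 - Π_div) σ, ∇v⟫`, bounded by the approximation property of
`Π_div`, and `⟪div (1 - Π_div) σ, v⟫ = ⟪(1 - Π) div σ, v⟫`. The latter residual is orthogonal to
the range of `Π`, so `v` may be replaced by `(1 - Π) v`, whose approximation property supplies
the factor `h`.
-/

open scoped RealInnerProductSpace

theorem real_inner_sub_le_of_orthogonal {E : Type*} [NormedAddCommGroup E]
    [InnerProductSpace ℝ E] {P : E → E} (hP : ∀ x y, ⟪x - P x, P y⟫ = 0) (x y : E) :
    ⟪x - P x, y⟫ ≤ ‖x - P x‖ * ‖y - P y‖ :=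
  calc ⟪x - P x, y⟫ = ⟪x - P x, y - P y⟫ := by rw [inner_sub_right, hP, sub_zero]
    _ ≤ ‖x - P x‖ * ‖y - P y‖ := real_inner_le_norm _ _

theorem iSup_div_norm_le {F : Type*} [NormedAddCommGroup F] (f : F → ℝ) {M : ℝ} (hM : 0 ≤ M)
    (hf : ∀ v, f v ≤ M * ‖v‖) : ⨆ v : {v : F // v ≠ 0}, f v / ‖(v : F)‖ ≤ M :=
  Real.iSup_le (fun ⟨v, hv⟩ => (div_le_iff₀ (norm_pos_iff.mpr hv)).mpr (hf v)) hM

theorem stmt9_general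
    {Hdv Hb L2 L2v : Type*}
    [NormedAddCommGroup Hdv] [InnerProductSpace ℝ Hdv]
    [NormedAddCommGroup Hb] [InnerProductSpace ℝ Hb]
    [NormedAddCommGroup L2] [InnerProductSpace ℝ L2]
    [NormedAddCommGroup L2v] [InnerProductSpace ℝ L2v]
    (Div : Hdv →ₗ[ℝ] L2) (Emb : Hdv →ₗ[ℝ] L2v)
    (Grad : Hb →ₗ[ℝ] L2v) (emb : Hb →ₗ[ℝ] L2)
    (hnormHb : ∀ v : Hb, ‖v‖ ^ 2 = ‖Grad v‖ ^ 2 + ‖emb v‖ ^ 2)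
    (pair : Hdv →ₗ[ℝ] Hb →ₗ[ℝ] ℝ)
    (hpair : ∀ (σ : Hdv) (v : Hb), pair σ v = ⟪Emb σ, Grad v⟫ + ⟪Div σ, emb v⟫)
    (h C0 Cp s : ℝ) (hh : 0 < h) (hC0 : 0 < C0) (hCp : 0 < Cp)
    (P : L2 →ₗ[ℝ] L2)
    (hPorth : ∀ x y : L2, ⟪x - P x, P y⟫ = 0)
    (Pdiv : Hdv →ₗ[ℝ] Hdv) (hcomm : ∀ σ : Hdv, Div (Pdiv σ) = P (Div σ))
    (HsNorm : Hdv → ℝ)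
    (happrox1 : ∀ σ : Hdv, ‖Emb σ - Emb (Pdiv σ)‖ ≤ Cp * h ^ s * HsNorm σ)
    (happrox2 : ∀ v : Hb, ‖emb v - P (emb v)‖ ≤ C0 * h * ‖Grad v‖)
    (hPbdd : ∀ x : L2, ‖x - P x‖ ≤ ‖x‖) :
    ∃ C > 0, ∀ σ : Hdv,
      (⨆ (v : {v : Hb // v ≠ 0}), pair (σ - Pdiv σ) (v : Hb) / ‖(v : Hb)‖)
        ≤ C * (h ^ s * HsNorm σ + h * ‖Div σ‖) := by
  refine ⟨Cp + C0, by positivity, fun σ => ?_⟩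
  have hHs : 0 ≤ HsNorm σ :=
    nonneg_of_mul_nonneg_right ((norm_nonneg _).trans (happrox1 σ)) (by positivity)
  have hGrad (v : Hb) : ‖Grad v‖ ≤ ‖v‖ := by
    refine (pow_le_pow_iff_left₀ (norm_nonneg _) (norm_nonneg _) two_ne_zero).mp ?_
    rw [hnormHb v]
    exact le_add_of_nonneg_right (sq_nonneg _)
  refine iSup_div_norm_le _ (by positivity) fun v => ?_
  calc pair (σ - Pdiv σ) v
      = ⟪Emb σ - Emb (Pdiv σ), Grad v⟫ + ⟪Div σ - P (Div σ), emb v⟫ := by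
        rw [hpair, map_sub, map_sub, hcomm]
    _ ≤ Cp * h ^ s * HsNorm σ * ‖v‖ + ‖Div σ‖ * (C0 * h * ‖v‖) := by
        gcongr
        · exact (real_inner_le_norm _ _).trans
            (mul_le_mul (happrox1 σ) (hGrad v) (norm_nonneg _) (by positivity))
        · exact (real_inner_sub_le_of_orthogonal hPorth _ _).trans
            (mul_le_mul (hPbdd _) ((happrox2 v).trans (by gcongr; exact hGrad v))
              (norm_nonneg _) (norm_nonneg _))
    _ ≤ (Cp + C0) * (h ^ s * HsNorm σ + h * ‖Div σ‖) * ‖v‖ := by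
        have : 0 ≤ (C0 * (h ^ s * HsNorm σ) + Cp * (h * ‖Div σ‖)) * ‖v‖ := by positivity
        linarith

/-- Theorem 3.1 (case `s ∈ (1/2,1)`): with the duality characterization of the skeleton
norm `‖·‖_{−1/2,𝒮}`, the approximation properties of the `L²` projection `Π^p` and of the
Raviart–Thomas projection `Π_div^p`, and the commutativity `div Π_div^p = Π^p div`,
`‖γ_{n,𝒮}(1 − Π_div^p)σ‖_{−1/2,𝒮} ≤ C (h^s ‖σ‖_{H^s(Ω)} + h ‖div σ‖)`, where `C`
depends only on the approximation constants.  Setting encoded abstractly as in the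
previous statements; `HsNorm σ` represents `‖σ‖_{H^s(Ω)}` for `H^s`-regular fields. -/
theorem stmt9
    {Hdv Hb L2 L2v : Type*}
    [NormedAddCommGroup Hdv] [InnerProductSpace ℝ Hdv] [CompleteSpace Hdv]
    [NormedAddCommGroup Hb] [InnerProductSpace ℝ Hb] [CompleteSpace Hb]
    [NormedAddCommGroup L2] [InnerProductSpace ℝ L2] [CompleteSpace L2]
    [NormedAddCommGroup L2v] [InnerProductSpace ℝ L2v] [CompleteSpace L2v]
    (Div : Hdv →ₗ[ℝ] L2) (Emb : Hdv →ₗ[ℝ] L2v)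
    (Grad : Hb →ₗ[ℝ] L2v) (emb : Hb →ₗ[ℝ] L2)
    (hnormHb : ∀ v : Hb, ‖v‖ ^ 2 = ‖Grad v‖ ^ 2 + ‖emb v‖ ^ 2)
    (pair : Hdv →ₗ[ℝ] Hb →ₗ[ℝ] ℝ)
    (hpair : ∀ (σ : Hdv) (v : Hb), pair σ v = ⟪Emb σ, Grad v⟫ + ⟪Div σ, emb v⟫)
    (p : ℕ) (h C0 Cp s : ℝ) (hh : 0 < h) (hC0 : 0 < C0) (hCp : 0 < Cp)
    (hs : 1 / 2 < s) (hs1 : s < 1)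
    (P : L2 →ₗ[ℝ] L2) (hPproj : ∀ x : L2, P (P x) = P x)
    (hPorth : ∀ x y : L2, ⟪x - P x, P y⟫ = 0)
    (Pdiv : Hdv →ₗ[ℝ] Hdv) (hcomm : ∀ σ : Hdv, Div (Pdiv σ) = P (Div σ))
    (HsNorm : Hdv → ℝ)
    (happrox1 : ∀ σ : Hdv, ‖Emb σ - Emb (Pdiv σ)‖ ≤ Cp * h ^ s * HsNorm σ)
    (happrox2 : ∀ v : Hb, ‖emb v - P (emb v)‖ ≤ C0 * h * ‖Grad v‖)
    (hPbdd : ∀ x : L2, ‖x - P x‖ ≤ ‖x‖) :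
    ∃ C > 0, ∀ σ : Hdv,
      (⨆ (v : {v : Hb // v ≠ 0}), pair (σ - Pdiv σ) (v : Hb) / ‖(v : Hb)‖)
        ≤ C * (h ^ s * HsNorm σ + h * ‖Div σ‖) :=
  stmt9_general Div Emb Grad emb hnormHb pair hpair h C0 Cp s hh hC0 hCp P hPorth Pdiv hcomm HsNorm
    happrox1 happrox2 hPbdd
end

section
/- Let g ∈ L²(Ω), (v, τ) ∈ H¹₀(Ω) × H(div,Ω) solve div τ + v = g, τ + ∇v = 0, and let Θ : U → V be the trial-to-test operator of the ultra-weak DPG formulation, ⟨Θ𝐮, 𝐯⟩_V = b(𝐮, 𝐯). Then the unique 𝐰 ∈ U with Θ𝐰 = (v, τ) is given explicitly by 𝐰 = (g, 0, γ_{0,𝒮} v, γ_{n,𝒮} τ); equivalently, ⟨(v,τ), (μ, λ)⟩_V = ⟨g, div_𝒯 λ + μ⟩ − ⟨γ_{0,𝒮} v, λ·n⟩_𝒮 − ⟨γ_{n,𝒮} τ, μ⟩_𝒮 for all (μ, λ) ∈ H¹(𝒯) × H(div,𝒯). -/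
open scoped RealInnerProductSpace

/- `Gradb`, `Divb` are the broken gradient and divergence, `embb`, `Embb` the `L²` embeddings of
`H¹(𝒯)` and `H(div,𝒯)`; `pr0 v lam` and `prn τ μ` stand for `⟨γ_{0,𝒮} v, λ·n⟩_𝒮` and
`⟨γ_{n,𝒮} τ, μ⟩_𝒮`, given by elementwise integration by parts. -/
theorem stmt13_general
    {Hb Hdvb L2 L2v : Type*}
    [NormedAddCommGroup Hb] [InnerProductSpace ℝ Hb]
    [NormedAddCommGroup Hdvb] [InnerProductSpace ℝ Hdvb]
    [NormedAddCommGroup L2] [InnerProductSpace ℝ L2]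
    [NormedAddCommGroup L2v] [InnerProductSpace ℝ L2v]
    (Gradb : Hb →ₗ[ℝ] L2v) (embb : Hb →ₗ[ℝ] L2)
    (Divb : Hdvb →ₗ[ℝ] L2) (Embb : Hdvb →ₗ[ℝ] L2v)
    (pr0 : Hb → Hdvb → ℝ) (prn : Hdvb → Hb → ℝ)
    (hpr0 : ∀ (w : Hb) (lam : Hdvb),
      pr0 w lam = ⟪Gradb w, Embb lam⟫ + ⟪embb w, Divb lam⟫)
    (hprn : ∀ (t : Hdvb) (μ : Hb),
      prn t μ = ⟪Embb t, Gradb μ⟫ + ⟪Divb t, embb μ⟫)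
    (g : L2) (v : Hb) (τ : Hdvb)
    (heq1 : Divb τ + embb v = g) (heq2 : Embb τ + Gradb v = 0) :
    ∀ (μ : Hb) (lam : Hdvb),
      ⟪embb v, embb μ⟫ + ⟪Gradb v, Gradb μ⟫ + ⟪Embb τ, Embb lam⟫ + ⟪Divb τ, Divb lam⟫
        = ⟪g, Divb lam + embb μ⟫ - pr0 v lam - prn τ μ := by
  intro μ lam
  have hτ : Embb τ = -Gradb v := eq_neg_of_add_eq_zero_left heq2
  -- After expanding `g = div τ + v`, the cross terms `⟨v, div λ⟩`, `⟨div τ, μ⟩` cancel and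
  -- `τ = -∇v` turns `-⟨∇v, λ⟩ - ⟨τ, ∇μ⟩` into `⟨τ, λ⟩ + ⟨∇v, ∇μ⟩`.
  rw [hpr0, hprn, ← heq1, hτ]
  simp only [inner_add_left, inner_add_right, inner_neg_left]
  ring

/-- Lemma 4.2 (second part, explicit representation of `𝐰` with `Θ𝐰 = (v,τ)`):
if `(v,τ)` solves `div τ + v = g`, `τ + ∇v = 0`, then for all broken test functions
`(μ,λ) ∈ H¹(𝒯) × H(div,𝒯)`,
`⟨(v,τ), (μ,λ)⟩_V = ⟨g, div_𝒯 λ + μ⟩ − ⟨γ_{0,𝒮} v, λ·n⟩_𝒮 − ⟨γ_{n,𝒮} τ, μ⟩_𝒮`,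
i.e. `Θ𝐰 = (v,τ)` for `𝐰 = (g, 0, γ_{0,𝒮} v, γ_{n,𝒮} τ)`.  Setting encoded abstractly:
`Gradb`, `embb`, `Divb`, `Embb` are the broken gradient/divergence operators and `L²`
embeddings on the broken spaces `Hb = H¹(𝒯)` and `Hdvb = H(div,𝒯)`; the `V` inner product
is the canonical one; the skeleton dualities of the (unbroken) `v` and `τ` are given by
elementwise integration by parts:
`⟨γ_{0,𝒮} v, λ·n⟩_𝒮 = ⟨∇v, λ⟩ + ⟨v, div_𝒯 λ⟩` and
`⟨γ_{n,𝒮} τ, μ⟩_𝒮 = ⟨τ, ∇_𝒯 μ⟩ + ⟨div τ, μ⟩`. -/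
theorem stmt13
    {Hb Hdvb L2 L2v : Type*}
    [NormedAddCommGroup Hb] [InnerProductSpace ℝ Hb] [CompleteSpace Hb]
    [NormedAddCommGroup Hdvb] [InnerProductSpace ℝ Hdvb] [CompleteSpace Hdvb]
    [NormedAddCommGroup L2] [InnerProductSpace ℝ L2] [CompleteSpace L2]
    [NormedAddCommGroup L2v] [InnerProductSpace ℝ L2v] [CompleteSpace L2v]
    (Gradb : Hb →ₗ[ℝ] L2v) (embb : Hb →ₗ[ℝ] L2)
    (Divb : Hdvb →ₗ[ℝ] L2) (Embb : Hdvb →ₗ[ℝ] L2v)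
    (pr0 : Hb → Hdvb → ℝ) (prn : Hdvb → Hb → ℝ)
    (hpr0 : ∀ (w : Hb) (lam : Hdvb),
      pr0 w lam = ⟪Gradb w, Embb lam⟫ + ⟪embb w, Divb lam⟫)
    (hprn : ∀ (t : Hdvb) (μ : Hb),
      prn t μ = ⟪Embb t, Gradb μ⟫ + ⟪Divb t, embb μ⟫)
    (g : L2) (v : Hb) (τ : Hdvb)
    (heq1 : Divb τ + embb v = g) (heq2 : Embb τ + Gradb v = 0) :
    ∀ (μ : Hb) (lam : Hdvb),
      ⟪embb v, embb μ⟫ + ⟪Gradb v, Gradb μ⟫ + ⟪Embb τ, Embb lam⟫ + ⟪Divb τ, Divb lam⟫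
        = ⟪g, Divb lam + embb μ⟫ - pr0 v lam - prn τ μ :=
  stmt13_general Gradb embb Divb Embb pr0 prn hpr0 hprn g v τ heq1 heq2
end

section
/- Let u ∈ H^{1+s}(Ω) for some s ∈ (1/2, p+1] with σ = ∇u, and let (u_h, σ_h) be the field components of a discrete function in U_{hp}. Define the postprocessed solution ũ_h ∈ 𝒫^{p+1}(𝒯) elementwise by ∫_T ∇ũ_h·∇w = ∫_T σ_h·∇w for all w ∈ 𝒫^{p+1}(T) and ∫_T ũ_h = ∫_T u_h. Then ‖u − ũ_h‖_{L²(Ω)} ≤ C h (‖u − u_h‖ + ‖σ − σ_h‖ + h^s ‖u‖_{H^{1+s}(Ω)}) + ‖Π⁰(u − u_h)‖, where Π⁰ is the elementwise L² projection onto constants and C depends only on the approximation constants and shape-regularity. -/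
open scoped RealInnerProductSpace

/-!
The postprocessed `ũ_h` is the energy projection of `σ_h` onto `𝒫^{p+1}(𝒯)`, so it is
quasi-optimal in the broken gradient: `‖∇(u - ũ_h)‖ ≤ ‖σ - σ_h‖ + 2 ‖∇(u - w)‖` for every
`w ∈ 𝒫^{p+1}(𝒯)`, and the interpolant bounds the last term by `C_I h^s ‖u‖_{H^{1+s}}`.
Split `u - ũ_h` into its piecewise mean and the remainder: the elementwise Poincaré
inequality bounds the remainder by `C h ‖∇(u - ũ_h)‖`, while the mean constraint makes the
piecewise mean of `u - ũ_h` equal to `Π⁰(u - u_h)`.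
-/

section EnergyProjection

variable {V E : Type*} [AddCommGroup V] [Module ℝ V]
  [NormedAddCommGroup E] [InnerProductSpace ℝ E]

theorem norm_le_norm_of_inner_sub_self_eq_zero {x y : E} (h : ⟪x - y, y⟫ = 0) :
    ‖y‖ ≤ ‖x‖ := by
  have hpyth := norm_add_sq_eq_norm_sq_add_norm_sq_real (x := y) (y := x - y)
    (by rwa [real_inner_comm])
  rw [add_sub_cancel] at hpyth
  exact (mul_self_le_mul_self_iff (norm_nonneg y) (norm_nonneg x)).mpr
    (hpyth ▸ le_add_of_nonneg_right (mul_self_nonneg _))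

variable (G : V →ₗ[ℝ] E) {W : Submodule ℝ V} {t : V} {σ : E}

theorem norm_map_sub_le_of_galerkin (hgal : ∀ w ∈ W, ⟪G t, G w⟫ = ⟪σ, G w⟫) (ht : t ∈ W)
    {w : V} (hw : w ∈ W) : ‖G t - G w‖ ≤ ‖σ - G w‖ := by
  apply norm_le_norm_of_inner_sub_self_eq_zero
  rw [sub_sub_sub_cancel_right, ← map_sub, inner_sub_left, hgal _ (W.sub_mem ht hw), sub_self]

theorem norm_map_sub_le_of_galerkin_quasiOptimal (hgal : ∀ w ∈ W, ⟪G t, G w⟫ = ⟪σ, G w⟫)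
    (ht : t ∈ W) (u : V) {w : V} (hw : w ∈ W) :
    ‖G u - G t‖ ≤ ‖G u - σ‖ + 2 * ‖G u - G w‖ := by
  have hproj := norm_map_sub_le_of_galerkin G hgal ht hw
  have hσ : ‖σ - G w‖ ≤ ‖G u - σ‖ + ‖G u - G w‖ := by
    simpa only [norm_sub_rev σ] using norm_sub_le_norm_sub_add_norm_sub σ (G u) (G w)
  calc ‖G u - G t‖ = ‖(G u - G w) - (G t - G w)‖ := by rw [sub_sub_sub_cancel_right]
    _ ≤ ‖G u - G w‖ + ‖G t - G w‖ := norm_sub_le _ _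
    _ ≤ ‖G u - σ‖ + 2 * ‖G u - G w‖ := by linarith

end EnergyProjection

theorem norm_le_of_poincare {Hb L2 L2v : Type*} [AddCommGroup Hb] [Module ℝ Hb]
    [NormedAddCommGroup L2] [NormedAddCommGroup L2v] [Module ℝ L2] [Module ℝ L2v]
    {Grad : Hb →ₗ[ℝ] L2v} {emb : Hb →ₗ[ℝ] L2} {P0 : L2 →ₗ[ℝ] L2} {c : ℝ}
    (hpoincare : ∀ w : Hb, ‖emb w - P0 (emb w)‖ ≤ c * ‖Grad w‖) (v : Hb) :
    ‖emb v‖ ≤ c * ‖Grad v‖ + ‖P0 (emb v)‖ := by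
  have := norm_le_norm_add_norm_sub' (emb v) (P0 (emb v))
  linarith [hpoincare v]

theorem stmt15_general
    {Hb L2 L2v : Type*}
    [NormedAddCommGroup Hb] [InnerProductSpace ℝ Hb] [CompleteSpace Hb]
    [NormedAddCommGroup L2] [InnerProductSpace ℝ L2] [CompleteSpace L2]
    [NormedAddCommGroup L2v] [InnerProductSpace ℝ L2v] [CompleteSpace L2v]
    (Grad : Hb →ₗ[ℝ] L2v) (emb : Hb →ₗ[ℝ] L2)
    (P0 : L2 →ₗ[ℝ] L2)
    (Wh : Submodule ℝ Hb)
    (h s Cpo CI : ℝ) (hh : 0 < h)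
    (hCpo : 0 < Cpo) (hCI : 0 < CI)
    (hpoincare : ∀ w : Hb, ‖emb w - P0 (emb w)‖ ≤ Cpo * h * ‖Grad w‖) :
    ∃ C > 0, ∀ (u : Hb) (Hnorm : ℝ) (uh tuh : Hb) (σh : L2v),
      tuh ∈ Wh →
      (∀ w ∈ Wh, ⟪Grad tuh, Grad w⟫ = ⟪σh, Grad w⟫) →
      P0 (emb tuh) = P0 (emb uh) →
      (∃ w ∈ Wh, ‖Grad u - Grad w‖ ≤ CI * h ^ s * Hnorm
          ∧ P0 (emb u) = P0 (emb w)) →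
      ‖emb u - emb tuh‖
        ≤ C * h * (‖emb u - emb uh‖ + ‖Grad u - σh‖ + h ^ s * Hnorm)
          + ‖P0 (emb u - emb uh)‖ := by
  refine ⟨Cpo * (2 * CI + 1), by positivity, ?_⟩
  rintro u Hnorm uh tuh σh htuh hgal hmean ⟨w, hw, hinterp, -⟩
  have hgrad := norm_map_sub_le_of_galerkin_quasiOptimal Grad hgal htuh u hw
  have hmean' : P0 (emb (u - tuh)) = P0 (emb u - emb uh) := by
    rw [map_sub, map_sub, hmean, map_sub]
  have hsplit := norm_le_of_poincare hpoincare (u - tuh)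
  rw [hmean', map_sub, map_sub] at hsplit
  have hHnorm : 0 ≤ h ^ s * Hnorm := by
    refine nonneg_of_mul_nonneg_right ?_ hCI
    rw [← mul_assoc]
    exact (norm_nonneg _).trans hinterp
  calc ‖emb u - emb tuh‖
      ≤ Cpo * h * (‖Grad u - σh‖ + 2 * (CI * (h ^ s * Hnorm))) + ‖P0 (emb u - emb uh)‖ := by
        refine hsplit.trans ?_
        rw [← mul_assoc CI]
        gcongr
        linarith
    _ ≤ Cpo * (2 * CI + 1) * h * (‖emb u - emb uh‖ + ‖Grad u - σh‖ + h ^ s * Hnorm)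
          + ‖P0 (emb u - emb uh)‖ := by
        have hcomb : ‖Grad u - σh‖ + 2 * (CI * (h ^ s * Hnorm))
            ≤ (2 * CI + 1) * (‖emb u - emb uh‖ + ‖Grad u - σh‖ + h ^ s * Hnorm) := by
          nlinarith [mul_nonneg hCI.le (norm_nonneg (emb u - emb uh)),
            mul_nonneg hCI.le (norm_nonneg (Grad u - σh))]
        have := mul_le_mul_of_nonneg_left hcomb (mul_pos hCpo hh).le
        linarith

/-- Lemma 5.1 (postprocessing estimate): if `u ∈ H^{1+s}(Ω)` with `σ = ∇u` and `ũ_h` is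
the elementwise postprocessed solution defined by
`∫_T ∇ũ_h·∇w = ∫_T σ_h·∇w` for all `w ∈ 𝒫^{p+1}(T)` and `∫_T ũ_h = ∫_T u_h`, then
`‖u − ũ_h‖ ≤ C h (‖u − u_h‖ + ‖σ − σ_h‖ + h^s ‖u‖_{H^{1+s}(Ω)}) + ‖Π⁰(u − u_h)‖`,
with `C` depending only on the approximation constants and shape-regularity.
Setting encoded abstractly: `Hb` is the broken space `H¹(𝒯)` with broken gradient `Grad`
and `L²`-embedding `emb`; `P0` is the `L²`-orthogonal projection onto piecewise
constants, satisfying the elementwise Poincaré inequality with constant `Cpo`;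
`Wh ⊆ Hb` represents `𝒫^{p+1}(𝒯)`; the postprocessing conditions are the (collected
elementwise) Neumann problems and the mean-value constraints; `Hnorm` represents
`‖u‖_{H^{1+s}(Ω)}` and the interpolation hypothesis encodes the approximation property
`min_{w ∈ 𝒫^{p+1}(𝒯)} ‖∇_𝒯(u − w)‖ ≤ C_I h^s ‖u‖_{H^{1+s}(Ω)}` (with elementwise
matching means). -/
theorem stmt15
    {Hb L2 L2v : Type*}
    [NormedAddCommGroup Hb] [InnerProductSpace ℝ Hb] [CompleteSpace Hb]
    [NormedAddCommGroup L2] [InnerProductSpace ℝ L2] [CompleteSpace L2]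
    [NormedAddCommGroup L2v] [InnerProductSpace ℝ L2v] [CompleteSpace L2v]
    (Grad : Hb →ₗ[ℝ] L2v) (emb : Hb →ₗ[ℝ] L2)
    (P0 : L2 →ₗ[ℝ] L2) (hP0proj : ∀ x : L2, P0 (P0 x) = P0 x)
    (hP0orth : ∀ x y : L2, ⟪x - P0 x, P0 y⟫ = 0)
    (Wh : Submodule ℝ Hb)
    (p : ℕ) (h s Cpo CI : ℝ) (hh : 0 < h) (hs : 1 / 2 < s) (hs1 : s ≤ (p : ℝ) + 1)
    (hCpo : 0 < Cpo) (hCI : 0 < CI)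
    (hpoincare : ∀ w : Hb, ‖emb w - P0 (emb w)‖ ≤ Cpo * h * ‖Grad w‖) :
    ∃ C > 0, ∀ (u : Hb) (Hnorm : ℝ) (uh tuh : Hb) (σh : L2v),
      tuh ∈ Wh →
      (∀ w ∈ Wh, ⟪Grad tuh, Grad w⟫ = ⟪σh, Grad w⟫) →
      P0 (emb tuh) = P0 (emb uh) →
      (∃ w ∈ Wh, ‖Grad u - Grad w‖ ≤ CI * h ^ s * Hnorm
          ∧ P0 (emb u) = P0 (emb w)) →
      ‖emb u - emb tuh‖
        ≤ C * h * (‖emb u - emb uh‖ + ‖Grad u - σh‖ + h ^ s * Hnorm)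
          + ‖P0 (emb u - emb uh)‖ :=
  stmt15_general Grad emb P0 Wh h s Cpo CI hh hCpo hCI hpoincare
end

section
/- Abstract duality argument for superconvergence: let U, V be Hilbert spaces, b bounded bilinear with boundedness constant ‖b‖, u the exact solution of b(u,·) = F, (u_h, ε_r) the mixed practical DPG solution with Galerkin orthogonality a((u − u_h, −ε_r), (w_h, v_r)) = 0 for all (w_h, v_r) ∈ U_h × V_r where a((u,ε),(w,v)) = ⟨ε,v⟩_V + b(u,v) − b(w,ε). Let g be any element of U with a linear functional G(u') := b(u', v_g) for a fixed v_g ∈ V, and suppose there exists w_g ∈ U with ⟨v_g, v⟩_V = b(w_g, v) for all v ∈ V. Then for all (w_h, v_r) ∈ U_h × V_r: b(u − u_h, v_g) = a((u − u_h, −ε_r), (w_g − w_h, v_g − v_r)), and hence |b(u − u_h, v_g)| ≤ C (‖u − u_h‖_U + ‖ε_r‖_V)(‖w_g − w_h‖_U + ‖v_g − v_r‖_V) with C depending only on ‖b‖. -/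
open scoped RealInnerProductSpace

/-!
With `a((e, ε), (w, v)) = ⟪ε, v⟫ + b(e, v) - b(w, ε)`, the dual pair `(w_g, v_g)` makes the
inner-product term cancel the `b(w_g, ε)` term, so `b(e, v_g) = a((e, ε), (w_g, v_g))`.
Galerkin orthogonality lets one subtract any discrete pair `(w_h, v_r)` from the test pair,
and the estimate is then just boundedness of `a`, which follows from Cauchy–Schwarz and the
boundedness of `b`.
-/

namespace DPG

variable {U V : Type*} [NormedAddCommGroup U] [InnerProductSpace ℝ U]
  [NormedAddCommGroup V] [InnerProductSpace ℝ V]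

noncomputable def mixedForm (b : U →L[ℝ] V →L[ℝ] ℝ) (e : U) (ε : V) (w : U) (v : V) : ℝ :=
  ⟪ε, v⟫ + b e v - b w ε

variable (b : U →L[ℝ] V →L[ℝ] ℝ)

theorem mixedForm_sub_sub (e : U) (ε : V) (w w' : U) (v v' : V) :
    mixedForm b e ε (w - w') (v - v') = mixedForm b e ε w v - mixedForm b e ε w' v' := by
  simp only [mixedForm, inner_sub_right, map_sub, sub_apply]
  ring

theorem mixedForm_dual_eq {wg : U} {vg : V} (hwg : ∀ v : V, ⟪vg, v⟫ = b wg v) (e : U) (ε : V) :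
    mixedForm b e ε wg vg = b e vg := by
  rw [mixedForm, real_inner_comm, hwg]
  ring

theorem apply_eq_mixedForm_sub {wg wh e : U} {vg vr ε : V}
    (hwg : ∀ v : V, ⟪vg, v⟫ = b wg v) (horth : mixedForm b e ε wh vr = 0) :
    b e vg = mixedForm b e ε (wg - wh) (vg - vr) := by
  rw [mixedForm_sub_sub, mixedForm_dual_eq b hwg, horth, sub_zero]

theorem abs_mixedForm_le {Mb : ℝ} (hMb : 0 ≤ Mb)
    (hbound : ∀ (u : U) (v : V), |b u v| ≤ Mb * ‖u‖ * ‖v‖) (e : U) (ε : V) (w : U) (v : V) :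
    |mixedForm b e ε w v| ≤ (1 + Mb) * (‖e‖ + ‖ε‖) * (‖w‖ + ‖v‖) := by
  have hinner : |⟪ε, v⟫| ≤ ‖ε‖ * ‖v‖ := abs_real_inner_le_norm ε v
  have hev := hbound e v
  have hwε := hbound w ε
  have hsplit : |mixedForm b e ε w v| ≤ |⟪ε, v⟫| + |b e v| + |b w ε| :=
    (abs_sub _ _).trans (add_le_add_left (abs_add_le _ _) _)
  have he := norm_nonneg e
  have hε := norm_nonneg ε
  have hw := norm_nonneg w
  have hv := norm_nonneg v
  nlinarith [mul_nonneg he hw, mul_nonneg hε hv, mul_nonneg hMb (mul_nonneg he hw),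
    mul_nonneg hMb (mul_nonneg hε hv)]

end DPG

open DPG in
theorem stmt17_general
    {U V : Type*} [NormedAddCommGroup U] [InnerProductSpace ℝ U]
    [NormedAddCommGroup V] [InnerProductSpace ℝ V]
    (b : U →L[ℝ] V →L[ℝ] ℝ) (Mb : ℝ) (hMb : 0 ≤ Mb)
    (hbound : ∀ (u : U) (v : V), |b u v| ≤ Mb * ‖u‖ * ‖v‖)
    (Uh : Submodule ℝ U) (Vr : Submodule ℝ V)
    (u : U)
    (uh : U) (εr : V)
    (hgal : ∀ wh ∈ Uh, ∀ vr ∈ Vr,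
      ⟪-εr, vr⟫ + b (u - uh) vr - b wh (-εr) = 0)
    (vg : V) (wg : U) (hwg : ∀ v : V, ⟪vg, v⟫ = b wg v) :
    ∀ wh ∈ Uh, ∀ vr ∈ Vr,
      (b (u - uh) vg
          = ⟪-εr, vg - vr⟫ + b (u - uh) (vg - vr) - b (wg - wh) (-εr))
      ∧ |b (u - uh) vg|
          ≤ (1 + Mb) * (‖u - uh‖ + ‖εr‖) * (‖wg - wh‖ + ‖vg - vr‖) := by
  intro wh hwh vr hvr
  have key := apply_eq_mixedForm_sub b hwg (hgal wh hwh vr hvr)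
  refine ⟨key, ?_⟩
  rw [key, ← norm_neg εr]
  exact abs_mixedForm_le b hMb hbound _ _ _ _

/-- Abstract duality argument for superconvergence (core of Theorems 4.3 and 5.2):
with Galerkin orthogonality for the mixed form `a` and a dual pair `(w_g, v_g)` with
`⟪v_g, v⟫_V = b(w_g, v)` for all `v`, one has for all discrete `(w_h, v_r)`
`b(u − u_h, v_g) = a((u − u_h, −ε_r), (w_g − w_h, v_g − v_r))`, and hence
`|b(u − u_h, v_g)| ≤ C (‖u − u_h‖_U + ‖ε_r‖_V)(‖w_g − w_h‖_U + ‖v_g − v_r‖_V)`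
with `C = 1 + ‖b‖` depending only on `‖b‖`. -/
theorem stmt17
    {U V : Type*} [NormedAddCommGroup U] [InnerProductSpace ℝ U] [CompleteSpace U]
    [NormedAddCommGroup V] [InnerProductSpace ℝ V] [CompleteSpace V]
    (b : U →L[ℝ] V →L[ℝ] ℝ) (Mb : ℝ) (hMb : 0 ≤ Mb)
    (hbound : ∀ (u : U) (v : V), |b u v| ≤ Mb * ‖u‖ * ‖v‖)
    (Uh : Submodule ℝ U) (Vr : Submodule ℝ V)
    (F : V →L[ℝ] ℝ) (u : U) (hu : ∀ v : V, b u v = F v)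
    (uh : U) (huh : uh ∈ Uh) (εr : V) (hεr : εr ∈ Vr)
    (hgal : ∀ wh ∈ Uh, ∀ vr ∈ Vr,
      ⟪-εr, vr⟫ + b (u - uh) vr - b wh (-εr) = 0)
    (vg : V) (wg : U) (hwg : ∀ v : V, ⟪vg, v⟫ = b wg v) :
    ∀ wh ∈ Uh, ∀ vr ∈ Vr,
      (b (u - uh) vg
          = ⟪-εr, vg - vr⟫ + b (u - uh) (vg - vr) - b (wg - wh) (-εr))
      ∧ |b (u - uh) vg|
          ≤ (1 + Mb) * (‖u - uh‖ + ‖εr‖) * (‖wg - wh‖ + ‖vg - vr‖) :=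
  stmt17_general b Mb hMb hbound Uh Vr u uh εr hgal vg wg hwg
end
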